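/- arXiv:math/0512257 — 5 statements merged into one kernel-verified Lean document; each statement's English description precedes it below -/
import Mathlib

section
/- The map λ ↦ (charge(λ), λ[0], λ[1]) is a bijection from the set of all strict partitions onto ℤ × {strict partitions} × {partitions}. -/
/-!
A strict partition `λ` splits into its even parts, recorded by `λ[0]`, and its odd parts, recorded
by the Maya diagram `M(λ)`: a part `4k + 1` is a bead at `k`, a missing part `4k + 3` is a bead at
`-k - 1`. Hence `λ` is recovered from `(λ[0], M(λ))`, and every pair (strict partition, Maya
diagram) arises. A Maya diagram in turn is the same as a pair (charge, partition): it is the range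
of the strictly decreasing sequence of β-numbers `p_j + c - j` of exactly one `(c, p)`, because a
strictly decreasing integer sequence is determined by its range. The one computation is that the
window `[-B, B]`, `B = |λ| + 1`, from which `λ[1]` is read off contains exactly `B + c` beads, so
that the β-numbers of `(c, λ[1])` continue the beads of the window by the whole half-line below it.
-/

noncomputable section

namespace Rect

/-- `l` is a partition: weakly decreasing list of positive integers -/
def IsPartition (l : List ℕ) : Prop := l.Pairwise (· ≥ ·) ∧ ∀ x ∈ l, 0 < x

/-- `l` is a strict partition: strictly decreasing list of positive integers -/
def IsStrictPartition (l : List ℕ) : Prop := l.Pairwise (· > ·) ∧ ∀ x ∈ l, 0 < x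

/-- the color of a node in column `j` (columns are 1-indexed) -/
def nodeColor (j : ℕ) : ℕ := if j % 4 = 0 ∨ j % 4 = 1 then 0 else 1

/-- `I_i^ℓ(λ)`: strict partitions `μ ⊇ λ` with `|μ| = |λ| + ℓ` all of whose nodes
outside `λ` have color `i` -/
def ISet (i ℓ : ℕ) (lam : List ℕ) : Set (List ℕ) :=
  {mu | IsStrictPartition mu ∧ (∀ j, lam.getD j 0 ≤ mu.getD j 0) ∧
    mu.sum = lam.sum + ℓ ∧
    ∀ j c, lam.getD j 0 < c → c ≤ mu.getD j 0 → nodeColor c = i}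

/-- the 4-bar core `c_m` -/
def cBar (m : ℤ) : List ℕ :=
  if 0 ≤ m then (List.range m.toNat).map fun i => 4 * (m.toNat - 1 - i) + 1
  else (List.range (-m).toNat).map fun i => 4 * ((-m).toNat - 1 - i) + 3

/-- `λ[0]`: the even parts of `λ`, halved -/
def bar0 (lam : List ℕ) : List ℕ := (lam.filter fun x => x % 2 == 0).map (· / 2)

/-- the charge of the Maya diagram of `λ` -/
def charge (lam : List ℕ) : ℤ :=
  ((lam.filter fun x => x % 4 == 1).length : ℤ) -
    ((lam.filter fun x => x % 4 == 3).length : ℤ)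

/-- membership in the Maya diagram
`M(λ) = {k ≥ 0 : 4k+1 ∈ λ} ∪ {k < 0 : -4k-1 ∉ λ}` -/
def mayaMem (lam : List ℕ) (k : ℤ) : Bool :=
  if 0 ≤ k then decide ((4 * k.toNat + 1) ∈ lam) else !(decide ((4 * (-k).toNat - 1) ∈ lam))

/-- the elements of the Maya diagram of `λ` in `[-B, B]`, `B = |λ|+1`, in
decreasing order; all elements `< -B` belong to `M(λ)` and all elements `> B`
do not, so this records all the information of `M(λ)`. -/
def mayaList (lam : List ℕ) : List ℤ :=
  ((List.range (2 * (lam.sum + 1) + 1)).map fun j => (lam.sum + 1 : ℤ) - j).filter (mayaMem lam)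

/-- `λ[1]`: writing the Maya diagram as a decreasing sequence `i_1 > i_2 > ⋯`,
this is the partition `(i_1 + 1 - c, i_2 + 2 - c, …)` where `c` is the charge -/
def bar1 (lam : List ℕ) : List ℕ :=
  (((mayaList lam).zipIdx.map Prod.swap).map fun p => (p.2 + (p.1 : ℤ) + 1 - charge lam).toNat).filter
    fun x => decide (0 < x)

/-- the number `g(λ)` of pairs of beads `(a, b)` on the 4-bar abacus with
`a ≡ 1 (mod 4)`, `b` even and `a > b`; a bead is put at `0` iff `M < 0` and `λ`
has exactly `-M` parts -/
def gnum (M : ℤ) (lam : List ℕ) : ℕ :=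
  let beads := if M < 0 ∧ lam.length = (-M).toNat then 0 :: lam else lam
  ((beads.filter fun a => a % 4 == 1).map fun a =>
    beads.countP fun b => decide (b % 2 = 0 ∧ b < a)).sum

/-- the sign `δ(λ) = (-1)^{g(λ)}` for `λ ∈ I_i^ℓ(c_M)` -/
def deltaSign (M : ℤ) (lam : List ℕ) : ℤ := (-1) ^ gnum M lam

/-- `ε_m`: 1 if `m` is odd, 0 if `m` is even -/
def epsN (m : ℕ) : ℕ := if m % 2 = 1 then 1 else 0

open Finset

lemma getD_le_getD_of_pairwise_ge {p : List ℕ} (hp : p.Pairwise (· ≥ ·)) {i j : ℕ}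
    (hij : i ≤ j) : p.getD j 0 ≤ p.getD i 0 := by
  rcases lt_or_ge j p.length with hj | hj
  · rw [List.getD_eq_getElem _ _ hj, List.getD_eq_getElem _ _ (hij.trans_lt hj)]
    rcases hij.eq_or_lt with rfl | hlt
    · rfl
    · exact List.pairwise_iff_getElem.mp hp i j _ hj hlt
  · rw [List.getD_eq_default _ _ hj]
    exact Nat.zero_le _

lemma getD_le_sum (p : List ℕ) (j : ℕ) : p.getD j 0 ≤ p.sum := by
  rcases lt_or_ge j p.length with hj | hj
  · rw [List.getD_eq_getElem _ _ hj]
    exact List.le_sum_of_mem (List.getElem_mem hj)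
  · rw [List.getD_eq_default _ _ hj]
    exact Nat.zero_le _

lemma eq_of_getD_eq {p q : List ℕ} (hp : ∀ x ∈ p, 0 < x) (hq : ∀ x ∈ q, 0 < x)
    (h : ∀ j, p.getD j 0 = q.getD j 0) : p = q := by
  induction p generalizing q with
  | nil =>
    cases q with
    | nil => rfl
    | cons b q => exact absurd (h 0) (by simpa using (hq b (by simp)).ne)
  | cons a p ih =>
    cases q with
    | nil => exact absurd (h 0) (by simpa using (hp a (by simp)).ne')
    | cons b q =>
      obtain rfl : a = b := h 0
      exact congrArg _ (ih (fun x hx => hp x (by simp [hx])) (fun x hx => hq x (by simp [hx]))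
        fun j => h (j + 1))

lemma getD_filter_pos {q : List ℕ} (hq : q.Pairwise (· ≥ ·)) (t : ℕ) :
    (q.filter fun x => decide (0 < x)).getD t 0 = q.getD t 0 := by
  induction q generalizing t with
  | nil => rfl
  | cons a q ih =>
    rcases Nat.eq_zero_or_pos a with rfl | ha
    · have hzero : ∀ x ∈ q, x = 0 := fun x hx => Nat.le_zero.mp (List.rel_of_pairwise_cons hq hx)
      rw [List.filter_cons_of_neg (by simp), List.filter_eq_nil_iff.mpr (by simpa using hzero)]
      cases t with
      | zero => rfl
      | succ t =>
        rw [List.getD_nil, List.getD_cons_succ, List.getD_eq_getElem?_getD]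
        cases h : q[t]? with
        | none => rfl
        | some x => exact (hzero x (List.mem_of_getElem? h)).symm
    · rw [List.filter_cons_of_pos (by simpa using ha)]
      cases t with
      | zero => rfl
      | succ t => exact ih hq.of_cons t

lemma getElem_add_le_getElem_add {w : List ℤ} (hw : w.Pairwise (· > ·)) {t u : ℕ} (htu : t ≤ u)
    (hu : u < w.length) : w[u] + u ≤ w[t] + t := by
  induction u, htu using Nat.le_induction with
  | base => rfl
  | succ v htv ih =>
    have hv : v < w.length := by omega
    have := List.pairwise_iff_getElem.mp hw v (v + 1) hv hu (by omega)
    have := ih hv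
    push_cast
    omega

/-- `beta m p` enumerates, decreasingly, the Maya diagram of charge `m` and partition `p`:
it is the inverse of `λ ↦ (charge λ, λ[1])`, with `j` shifted to start at `0`. -/
def beta (m : ℤ) (p : List ℕ) (j : ℕ) : ℤ := p.getD j 0 + m - 1 - j

lemma beta_strictAnti {p : List ℕ} (hp : p.Pairwise (· ≥ ·)) (m : ℤ) : StrictAnti (beta m p) :=
  strictAnti_nat_of_succ_lt fun j => by
    have : p.getD (j + 1) 0 ≤ p.getD j 0 := getD_le_getD_of_pairwise_ge hp j.le_succ
    simp only [beta]
    push_cast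
    omega

lemma beta_of_length_le (m : ℤ) {p : List ℕ} {j : ℕ} (hj : p.length ≤ j) :
    beta m p j = m - 1 - j := by
  rw [beta, List.getD_eq_default _ _ hj]
  push_cast
  ring

lemma beta_le (m : ℤ) (p : List ℕ) (j : ℕ) : beta m p j ≤ p.sum + m - 1 := by
  have := getD_le_sum p j
  simp only [beta]
  omega

lemma eq_of_range_beta_eq {m₁ m₂ : ℤ} {p₁ p₂ : List ℕ} (h₁ : IsPartition p₁)
    (h₂ : IsPartition p₂) (h : Set.range (beta m₁ p₁) = Set.range (beta m₂ p₂)) :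
    m₁ = m₂ ∧ p₁ = p₂ := by
  have hβ : beta m₁ p₁ = beta m₂ p₂ :=
    ((beta_strictAnti h₁.1 m₁).dual_right.range_inj (beta_strictAnti h₂.1 m₂).dual_right).mp
      (by rw [Set.range_comp, Set.range_comp, h])
  have hm : m₁ = m₂ := by
    have := congrFun hβ (p₁.length + p₂.length)
    rw [beta_of_length_le _ (by omega), beta_of_length_le _ (by omega)] at this
    omega
  subst hm
  refine ⟨rfl, eq_of_getD_eq h₁.2 h₂.2 fun j => ?_⟩
  have := congrFun hβ j
  simp only [beta] at this
  omega

lemma mayaMem_natCast (l : List ℕ) (k : ℕ) : mayaMem l k = true ↔ 4 * k + 1 ∈ l := by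
  simp [mayaMem]

lemma mayaMem_neg_succ (l : List ℕ) (k : ℕ) :
    mayaMem l (-((k : ℤ) + 1)) = true ↔ 4 * k + 3 ∉ l := by
  rw [mayaMem, if_neg (by omega), show (-(-((k : ℤ) + 1))).toNat = k + 1 by omega,
    show 4 * (k + 1) - 1 = 4 * k + 3 by omega]
  simp

lemma mayaMem_of_lt (l : List ℕ) {k : ℤ} (hk : k < -((l.sum : ℤ) + 1)) : mayaMem l k = true := by
  obtain ⟨j, rfl⟩ : ∃ j : ℕ, k = -((j : ℤ) + 1) := ⟨(-k - 1).toNat, by omega⟩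
  rw [mayaMem_neg_succ]
  intro hj
  have := List.le_sum_of_mem hj
  omega

lemma mayaMem_of_gt (l : List ℕ) {k : ℤ} (hk : (l.sum : ℤ) + 1 < k) : mayaMem l k = false := by
  obtain ⟨j, rfl⟩ : ∃ j : ℕ, k = j := ⟨k.toNat, by omega⟩
  rw [← Bool.not_eq_true, mayaMem_natCast]
  intro hj
  have := List.le_sum_of_mem hj
  omega

-- `mayaList` casts `List.range` into `List ℤ` through the list monad.
lemma mayaList_eq_filter (l : List ℕ) :
    mayaList l = ((List.range (2 * (l.sum + 1) + 1)).map fun j : ℕ => (l.sum : ℤ) + 1 - j).filter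
      (mayaMem l) := by
  simp only [mayaList, bind_pure_comp, List.map_eq_map, List.map_map]
  rfl

lemma mem_mayaList {l : List ℕ} {k : ℤ} :
    k ∈ mayaList l ↔ -((l.sum : ℤ) + 1) ≤ k ∧ k ≤ l.sum + 1 ∧ mayaMem l k = true := by
  simp only [mayaList_eq_filter, List.mem_filter, List.mem_map, List.mem_range]
  constructor
  · rintro ⟨⟨j, hj, rfl⟩, hk⟩
    exact ⟨by omega, by omega, hk⟩
  · rintro ⟨h₁, h₂, hk⟩
    exact ⟨⟨(l.sum + 1 - k).toNat, by omega, by omega⟩, hk⟩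

lemma mayaList_pairwise (l : List ℕ) : (mayaList l).Pairwise (· > ·) := by
  rw [mayaList_eq_filter]
  exact (List.pairwise_map.mpr (List.pairwise_lt_range.imp fun h => by omega)).filter _

lemma card_mayaMem_nonneg {l : List ℕ} (hl : l.Nodup) :
    #{k ∈ Icc (0 : ℤ) (l.sum + 1) | mayaMem l k} = (l.filter fun x => x % 4 == 1).length := by
  rw [← List.toFinset_card_of_nodup (hl.filter _)]
  refine card_nbij' (fun k => 4 * k.toNat + 1) (fun x => ((x / 4 : ℕ) : ℤ)) ?_ ?_ ?_ ?_
  · intro k hk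
    simp only [coe_filter, Set.mem_ofPred_eq, mem_Icc] at hk
    obtain ⟨⟨hk₀, -⟩, hk⟩ := hk
    lift k to ℕ using hk₀
    simp_all [mayaMem_natCast]
  · intro x hx
    simp only [List.coe_toFinset, List.mem_filter, Set.mem_ofPred_eq, beq_iff_eq] at hx
    have := List.le_sum_of_mem hx.1
    simp only [coe_filter, Set.mem_ofPred_eq, mem_Icc, mayaMem_natCast]
    exact ⟨⟨by omega, by omega⟩, by rw [show 4 * (x / 4) + 1 = x by omega]; exact hx.1⟩
  · intro k hk
    simp only [coe_filter, Set.mem_ofPred_eq, mem_Icc] at hk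
    simp only
    omega
  · intro x hx
    simp only [List.coe_toFinset, List.mem_filter, Set.mem_ofPred_eq, beq_iff_eq] at hx
    simp only [Int.toNat_natCast]
    omega

lemma card_not_mayaMem_neg {l : List ℕ} (hl : l.Nodup) :
    #{k ∈ Icc (-((l.sum : ℤ) + 1)) (-1) | mayaMem l k = false} =
      (l.filter fun x => x % 4 == 3).length := by
  rw [← List.toFinset_card_of_nodup (hl.filter _)]
  refine card_nbij' (fun k => 4 * (-k - 1).toNat + 3) (fun x => -(((x / 4 : ℕ) : ℤ) + 1))
    ?_ ?_ ?_ ?_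
  · intro k hk
    simp only [coe_filter, Set.mem_ofPred_eq, mem_Icc] at hk
    obtain ⟨⟨-, hk₀⟩, hk⟩ := hk
    obtain ⟨j, rfl⟩ : ∃ j : ℕ, k = -((j : ℤ) + 1) := ⟨(-k - 1).toNat, by omega⟩
    rw [← Bool.not_eq_true, mayaMem_neg_succ, not_not] at hk
    simp only [List.coe_toFinset, List.mem_filter, Set.mem_ofPred_eq, beq_iff_eq,
      show (-(-((j : ℤ) + 1)) - 1).toNat = j by omega]
    exact ⟨hk, by omega⟩
  · intro x hx
    simp only [List.coe_toFinset, List.mem_filter, Set.mem_ofPred_eq, beq_iff_eq] at hx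
    have := List.le_sum_of_mem hx.1
    simp only [coe_filter, Set.mem_ofPred_eq, mem_Icc, ← Bool.not_eq_true, mayaMem_neg_succ,
      not_not]
    exact ⟨⟨by omega, by omega⟩, by rw [show 4 * (x / 4) + 3 = x by omega]; exact hx.1⟩
  · intro k hk
    simp only [coe_filter, Set.mem_ofPred_eq, mem_Icc] at hk
    simp only
    omega
  · intro x hx
    simp only [List.coe_toFinset, List.mem_filter, Set.mem_ofPred_eq, beq_iff_eq] at hx
    simp only
    omega

lemma length_mayaList {l : List ℕ} (hl : l.Nodup) :
    ((mayaList l).length : ℤ) = l.sum + 1 + charge l := by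
  obtain ⟨B, hB⟩ : ∃ B : ℤ, B = l.sum + 1 := ⟨_, rfl⟩
  have hwindow : (mayaList l).toFinset = {k ∈ Icc (-B) B | mayaMem l k} := by
    ext k
    simp only [List.mem_toFinset, mem_mayaList, mem_filter, mem_Icc, and_assoc, hB]
  have hsplit : Icc (-B) B = Icc (-B) (-1) ∪ Icc 0 B := by
    ext k
    simp only [mem_union, mem_Icc]
    omega
  have hdisj : Disjoint {k ∈ Icc (-B) (-1) | mayaMem l k} {k ∈ Icc 0 B | mayaMem l k} :=
    disjoint_filter_filter <| disjoint_left.mpr fun k hk hk' => by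
      simp only [mem_Icc] at hk hk'
      omega
  have hneg := card_filter_add_card_filter_not (s := Icc (-B) (-1)) (fun k => mayaMem l k = true)
  have hcount₃ := card_not_mayaMem_neg hl
  have hcount₁ := card_mayaMem_nonneg hl
  simp only [Bool.not_eq_true] at hneg
  rw [← hB] at hcount₁ hcount₃
  rw [hcount₃] at hneg
  have hIcc : ((Icc (-B) (-1)).card : ℤ) = B := by
    rw [Int.card_Icc]
    omega
  rw [← List.toFinset_card_of_nodup (mayaList_pairwise l).nodup, hwindow, hsplit, filter_union,
    card_union_of_disjoint hdisj, hcount₁, charge, Nat.cast_add]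
  omega

def bar1Padded (l : List ℕ) : List ℕ :=
  ((mayaList l).zipIdx.map Prod.swap).map fun p => (p.2 + (p.1 : ℤ) + 1 - charge l).toNat

lemma bar1_eq_filter_bar1Padded (l : List ℕ) :
    bar1 l = (bar1Padded l).filter fun x => decide (0 < x) := rfl

lemma length_bar1Padded (l : List ℕ) : (bar1Padded l).length = (mayaList l).length := by
  simp [bar1Padded]

lemma getElem_bar1Padded (l : List ℕ) {t : ℕ} (ht : t < (mayaList l).length) :
    (bar1Padded l)[t]'(by rwa [length_bar1Padded]) =
      ((mayaList l)[t] + t + 1 - charge l).toNat := by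
  simp [bar1Padded]

lemma bar1Padded_pairwise (l : List ℕ) : (bar1Padded l).Pairwise (· ≥ ·) := by
  refine List.pairwise_iff_getElem.mpr fun i j hi hj hij => ?_
  rw [length_bar1Padded] at hi hj
  rw [getElem_bar1Padded l hi, getElem_bar1Padded l hj]
  have := getElem_add_le_getElem_add (mayaList_pairwise l) hij.le hj
  omega

theorem bar1_isPartition (l : List ℕ) : IsPartition (bar1 l) := by
  rw [bar1_eq_filter_bar1Padded]
  exact ⟨(bar1Padded_pairwise l).filter _, fun x hx => by simpa using (List.mem_filter.mp hx).2⟩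

lemma charge_sub_le_getElem_mayaList {l : List ℕ} (hl : l.Nodup) {t : ℕ}
    (ht : t < (mayaList l).length) : charge l - 1 - t ≤ (mayaList l)[t] := by
  have hlen := length_mayaList hl
  have hlast : (mayaList l).length - 1 < (mayaList l).length := by omega
  have hbound := (mem_mayaList.mp (List.getElem_mem hlast)).1
  have := getElem_add_le_getElem_add (mayaList_pairwise l) (Nat.le_sub_one_of_lt ht) hlast
  omega

lemma beta_charge_bar1 {l : List ℕ} (hl : l.Nodup) (t : ℕ) :
    beta (charge l) (bar1 l) t =
      if ht : t < (mayaList l).length then (mayaList l)[t] else charge l - 1 - t := by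
  rw [beta, bar1_eq_filter_bar1Padded, getD_filter_pos (bar1Padded_pairwise l)]
  split_ifs with ht
  · rw [List.getD_eq_getElem _ _ (by rwa [length_bar1Padded]), getElem_bar1Padded l ht]
    have := charge_sub_le_getElem_mayaList hl ht
    omega
  · rw [List.getD_eq_default _ _ (by rw [length_bar1Padded]; omega)]
    push_cast
    ring

theorem mayaMem_iff_mem_range_beta {l : List ℕ} (hl : l.Nodup) (k : ℤ) :
    mayaMem l k = true ↔ k ∈ Set.range (beta (charge l) (bar1 l)) := by
  have hlen := length_mayaList hl
  simp only [Set.mem_range, beta_charge_bar1 hl]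
  constructor
  · intro hk
    by_cases hlow : k < -((l.sum : ℤ) + 1)
    · exact ⟨(charge l - 1 - k).toNat, by rw [dif_neg (by omega)]; omega⟩
    · have hhigh : k ≤ l.sum + 1 := by
        by_contra h
        rw [mayaMem_of_gt l (by omega)] at hk
        exact Bool.false_ne_true hk
      obtain ⟨t, ht, rfl⟩ := List.getElem_of_mem (mem_mayaList.mpr ⟨by omega, hhigh, hk⟩)
      exact ⟨t, dif_pos ht⟩
  · rintro ⟨t, rfl⟩
    split_ifs with ht
    · exact (mem_mayaList.mp (List.getElem_mem ht)).2.2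
    · exact mayaMem_of_lt l (by omega)

lemma mem_bar0 {l : List ℕ} (hl : ∀ x ∈ l, 0 < x) (x : ℕ) : x ∈ bar0 l ↔ 0 < x ∧ 2 * x ∈ l := by
  simp only [bar0, List.mem_map, List.mem_filter, beq_iff_eq]
  constructor
  · rintro ⟨y, ⟨hy, hy₂⟩, rfl⟩
    have := hl y hy
    exact ⟨by omega, by rwa [Nat.mul_div_cancel' (Nat.dvd_of_mod_eq_zero hy₂)]⟩
  · rintro ⟨-, hx⟩
    exact ⟨2 * x, ⟨hx, by omega⟩, by omega⟩

theorem bar0_isStrictPartition {l : List ℕ} (hl : IsStrictPartition l) :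
    IsStrictPartition (bar0 l) := by
  refine ⟨List.pairwise_map.mpr ((hl.1.filter _).imp_of_mem fun ha hb hab => ?_),
    fun x hx => ((mem_bar0 hl.2 x).mp hx).1⟩
  simp only [List.mem_filter, beq_iff_eq] at ha hb
  omega

/-- The parts of the strict partition `λ` with `λ[0] = s` and Maya diagram `M`. -/
def partsOf (s : List ℕ) (M : Set ℤ) : Set ℕ :=
  {n | 0 < n ∧ (n % 2 = 0 ∧ n / 2 ∈ s ∨ n % 4 = 1 ∧ ((n / 4 : ℕ) : ℤ) ∈ M ∨
    n % 4 = 3 ∧ -(((n / 4 : ℕ) : ℤ) + 1) ∉ M)}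

lemma mem_iff_mem_partsOf {l : List ℕ} (hl : ∀ x ∈ l, 0 < x) (n : ℕ) :
    n ∈ l ↔ n ∈ partsOf (bar0 l) {k | mayaMem l k} := by
  have h₀ := mem_bar0 hl (n / 2)
  have h₁ := mayaMem_natCast l (n / 4)
  have h₃ := mayaMem_neg_succ l (n / 4)
  simp only [partsOf, Set.mem_ofPred_eq]
  have := hl n
  rcases (by omega : n % 2 = 0 ∨ n % 4 = 1 ∨ n % 4 = 3) with h | h | h
  · rw [show 2 * (n / 2) = n by omega] at h₀
    grind
  · rw [show 4 * (n / 4) + 1 = n by omega] at h₁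
    grind
  · rw [show 4 * (n / 4) + 3 = n by omega] at h₃
    grind

lemma mayaMem_iff_of_mem_iff_partsOf {l s : List ℕ} {M : Set ℤ}
    (h : ∀ n, n ∈ l ↔ n ∈ partsOf s M) (k : ℤ) : mayaMem l k = true ↔ k ∈ M := by
  rcases k with k | k
  · rw [Int.ofNat_eq_natCast, mayaMem_natCast, h, partsOf, Set.mem_ofPred_eq,
      show (4 * k + 1) / 4 = k by omega]
    grind
  · rw [Int.negSucc_eq, mayaMem_neg_succ, h, partsOf, Set.mem_ofPred_eq,
      show (4 * k + 3) / 4 = k by omega]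
    grind

lemma mem_bar0_iff_of_mem_iff_partsOf {l s : List ℕ} {M : Set ℤ} (hs : ∀ x ∈ s, 0 < x)
    (h : ∀ n, n ∈ l ↔ n ∈ partsOf s M) (x : ℕ) : x ∈ bar0 l ↔ x ∈ s := by
  rw [mem_bar0 (fun n hn => ((h n).mp hn).1), h, partsOf, Set.mem_ofPred_eq,
    show 2 * x / 2 = x by omega]
  have := hs x
  grind

lemma partsOf_range_beta_subset (m : ℤ) (s p : List ℕ) :
    partsOf s (Set.range (beta m p)) ⊆
      Set.Iic (2 * s.sum + 4 * (p.sum + p.length + m.natAbs) + 3) := by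
  rintro n ⟨-, ⟨-, hs⟩ | ⟨-, j, hj⟩ | ⟨-, hn⟩⟩ <;> rw [Set.mem_Iic]
  · have := List.le_sum_of_mem hs
    omega
  · have := beta_le m p j
    omega
  · by_contra hbig
    refine hn ⟨(m + (n / 4 : ℕ)).toNat, ?_⟩
    rw [beta_of_length_le _ (by omega)]
    omega

def ofBarQuotient (m : ℤ) (s p : List ℕ) : List ℕ :=
  ((Set.finite_Iic _).subset (partsOf_range_beta_subset m s p)).toFinset.sort (· ≥ ·)

lemma mem_ofBarQuotient {m : ℤ} {s p : List ℕ} {n : ℕ} :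
    n ∈ ofBarQuotient m s p ↔ n ∈ partsOf s (Set.range (beta m p)) := by
  rw [ofBarQuotient, Finset.mem_sort, Set.Finite.mem_toFinset]

lemma ofBarQuotient_isStrictPartition (m : ℤ) (s p : List ℕ) :
    IsStrictPartition (ofBarQuotient m s p) :=
  ⟨(Finset.sortedGT_sort _).pairwise, fun _ hn => (mem_ofBarQuotient.mp hn).1⟩

lemma bar0_ofBarQuotient (m : ℤ) {s : List ℕ} (hs : IsStrictPartition s) (p : List ℕ) :
    bar0 (ofBarQuotient m s p) = s :=
  (bar0_isStrictPartition (ofBarQuotient_isStrictPartition m s p)).1.eq_of_mem_iff hs.1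
    (mem_bar0_iff_of_mem_iff_partsOf hs.2 fun _ => mem_ofBarQuotient)

lemma charge_ofBarQuotient_and_bar1 (m : ℤ) (s : List ℕ) {p : List ℕ} (hp : IsPartition p) :
    charge (ofBarQuotient m s p) = m ∧ bar1 (ofBarQuotient m s p) = p := by
  refine eq_of_range_beta_eq (bar1_isPartition _) hp (Set.ext fun k => ?_)
  rw [← mayaMem_iff_mem_range_beta (ofBarQuotient_isStrictPartition m s p).1.nodup,
    mayaMem_iff_of_mem_iff_partsOf (fun _ => mem_ofBarQuotient)]

lemma ofBarQuotient_charge_bar0_bar1 {l : List ℕ} (hl : IsStrictPartition l) :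
    ofBarQuotient (charge l) (bar0 l) (bar1 l) = l := by
  have hM : {k | mayaMem l k} = Set.range (beta (charge l) (bar1 l)) :=
    Set.ext (mayaMem_iff_mem_range_beta hl.1.nodup)
  refine (ofBarQuotient_isStrictPartition _ _ _).1.eq_of_mem_iff hl.1 fun n => ?_
  rw [mem_ofBarQuotient, mem_iff_mem_partsOf hl.2, hM]

/-- The map `λ ↦ (charge λ, λ[0], λ[1])` is a bijection from the set of strict
partitions onto `ℤ × {strict partitions} × {partitions}`:  it maps strict
partitions into the target set, and every `(m, s, p)` in the target has a unique
preimage. -/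
theorem barQuotient_bijective :
    (∀ l : List ℕ, IsStrictPartition l → IsStrictPartition (bar0 l) ∧ IsPartition (bar1 l)) ∧
    (∀ (m : ℤ) (s p : List ℕ), IsStrictPartition s → IsPartition p →
      ∃! l : List ℕ, IsStrictPartition l ∧ charge l = m ∧ bar0 l = s ∧ bar1 l = p) := by
  refine ⟨fun l hl => ⟨bar0_isStrictPartition hl, bar1_isPartition l⟩, fun m s p hs hp => ?_⟩
  obtain ⟨hcharge, hbar1⟩ := charge_ofBarQuotient_and_bar1 m s hp
  refine ⟨ofBarQuotient m s p,
    ⟨ofBarQuotient_isStrictPartition m s p, hcharge, bar0_ofBarQuotient m hs p, hbar1⟩, ?_⟩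
  rintro l ⟨hl, rfl, rfl, rfl⟩
  exact (ofBarQuotient_charge_bar0_bar1 hl).symm

end Rect
end
end

section
/- For every integer m > 0: I_1^ℓ(c_m) = ∅ for all integers ℓ > 2m, and I_0^ℓ(c_{−m}) = ∅ for all integers ℓ > 2m+1. -/
noncomputable section

namespace Rect

/-! Colours alternate in blocks of two columns, so the nodes added to a row in one colour
number at most two. Column 1 has colour 0, so in colour 1 no new row can start; column 2
has colour 1, so in colour 0 new rows have one node, and strictness allows only one of
them. Hence `ℓ ≤ 2 * len λ` in colour 1 and `ℓ ≤ 2 * len λ + 1` in colour 0, and `c_m`,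
`c_{-m}` have `m` parts. -/

lemma nodeColor_add_two_ne (c : ℕ) : nodeColor (c + 2) ≠ nodeColor c := by
  unfold nodeColor
  split_ifs <;> omega

lemma length_cBar (m : ℤ) : (cBar m).length = m.natAbs := by
  unfold cBar
  split_ifs <;> simp <;> omega

lemma sum_eq_sum_range_getD (l : List ℕ) {n : ℕ} (hn : l.length ≤ n) :
    l.sum = ∑ j ∈ Finset.range n, l.getD j 0 := by
  induction l generalizing n with
  | nil => simp
  | cons a l ih =>
    obtain ⟨n, rfl⟩ : ∃ k, n = k + 1 := Nat.exists_eq_add_one.mpr (by simp at hn; omega)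
    rw [Finset.sum_range_succ', List.sum_cons, ih (by simpa using hn)]
    simp [add_comm]

lemma IsStrictPartition.length_le_of_getD_eq_zero {l : List ℕ} (hl : IsStrictPartition l)
    {j : ℕ} (hj : l.getD j 0 = 0) : l.length ≤ j := by
  by_contra! hlt
  rw [List.getD_eq_getElem _ _ hlt] at hj
  exact (hl.2 _ (List.getElem_mem hlt)).ne' hj

lemma IsStrictPartition.length_le_succ_of_getD_le_one {l : List ℕ} (hl : IsStrictPartition l)
    {j : ℕ} (hj : l.getD j 0 ≤ 1) : l.length ≤ j + 1 := by
  by_contra! hlt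
  have hdec := List.pairwise_iff_getElem.mp hl.1 j (j + 1) (by omega) hlt (by omega)
  have hpos := hl.2 _ (List.getElem_mem hlt)
  rw [List.getD_eq_getElem _ _ (by omega)] at hj
  omega

section ISet

variable {i ℓ : ℕ} {lam mu : List ℕ}

lemma getD_le_add_two_of_mem_ISet (h : mu ∈ ISet i ℓ lam) (j : ℕ) :
    mu.getD j 0 ≤ lam.getD j 0 + 2 := by
  by_contra! hj
  obtain ⟨-, -, -, hcol⟩ := h
  exact nodeColor_add_two_ne (lam.getD j 0 + 1)
    ((hcol j _ (by omega) (by omega)).trans (hcol j _ (by omega) (by omega)).symm)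

lemma getD_eq_zero_of_mem_ISet_one (h : mu ∈ ISet 1 ℓ lam) {j : ℕ} (hj : lam.length ≤ j) :
    mu.getD j 0 = 0 := by
  by_contra! hpos
  have h1 : nodeColor 1 = 1 :=
    h.2.2.2 j 1 (by rw [List.getD_eq_default _ _ hj]; omega) (by omega)
  exact absurd h1 (by decide)

lemma getD_le_one_of_mem_ISet_zero (h : mu ∈ ISet 0 ℓ lam) {j : ℕ} (hj : lam.length ≤ j) :
    mu.getD j 0 ≤ 1 := by
  by_contra! hgt
  have h2 : nodeColor 2 = 0 :=
    h.2.2.2 j 2 (by rw [List.getD_eq_default _ _ hj]; omega) (by omega)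
  exact absurd h2 (by decide)

lemma sum_range_length_getD_le (h : mu ∈ ISet i ℓ lam) :
    ∑ j ∈ Finset.range lam.length, mu.getD j 0 ≤ lam.sum + 2 * lam.length := by
  calc ∑ j ∈ Finset.range lam.length, mu.getD j 0
      ≤ ∑ j ∈ Finset.range lam.length, (lam.getD j 0 + 2) :=
        Finset.sum_le_sum fun j _ => getD_le_add_two_of_mem_ISet h j
    _ = lam.sum + 2 * lam.length := by
        rw [Finset.sum_add_distrib, ← sum_eq_sum_range_getD lam le_rfl]
        simp [mul_comm]

lemma le_two_mul_length_of_mem_ISet_one (h : mu ∈ ISet 1 ℓ lam) : ℓ ≤ 2 * lam.length := by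
  have hlen : mu.length ≤ lam.length :=
    h.1.length_le_of_getD_eq_zero (getD_eq_zero_of_mem_ISet_one h le_rfl)
  have := sum_range_length_getD_le h
  rw [← sum_eq_sum_range_getD mu hlen, h.2.2.1] at this
  omega

lemma le_two_mul_length_add_one_of_mem_ISet_zero (h : mu ∈ ISet 0 ℓ lam) :
    ℓ ≤ 2 * lam.length + 1 := by
  have hlast := getD_le_one_of_mem_ISet_zero h le_rfl
  have hsum := sum_eq_sum_range_getD mu (h.1.length_le_succ_of_getD_le_one hlast)
  rw [Finset.sum_range_succ, h.2.2.1] at hsum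
  have := sum_range_length_getD_le h
  omega

end ISet

theorem ISet_eq_empty_general (m : ℕ) :
    (∀ ℓ : ℕ, 2 * m < ℓ → ISet 1 ℓ (cBar (m : ℤ)) = ∅) ∧
    (∀ ℓ : ℕ, 2 * m + 1 < ℓ → ISet 0 ℓ (cBar (-(m : ℤ))) = ∅) := by
  constructor
  · refine fun ℓ hℓ => Set.eq_empty_of_forall_notMem fun mu h => ?_
    have := le_two_mul_length_of_mem_ISet_one h
    rw [length_cBar, Int.natAbs_natCast] at this
    omega
  · refine fun ℓ hℓ => Set.eq_empty_of_forall_notMem fun mu h => ?_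
    have := le_two_mul_length_add_one_of_mem_ISet_zero h
    rw [length_cBar, Int.natAbs_neg, Int.natAbs_natCast] at this
    omega

/-- For every integer `m > 0`:  `I_1^ℓ(c_m) = ∅` for all `ℓ > 2m`, and
`I_0^ℓ(c_{-m}) = ∅` for all `ℓ > 2m+1`. -/
theorem ISet_eq_empty (m : ℕ) (hm : 0 < m) :
    (∀ ℓ : ℕ, 2 * m < ℓ → ISet 1 ℓ (cBar (m : ℤ)) = ∅) ∧
    (∀ ℓ : ℕ, 2 * m + 1 < ℓ → ISet 0 ℓ (cBar (-(m : ℤ))) = ∅) :=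
  ISet_eq_empty_general m

end Rect
end
end

section
/- For every integer ℓ ≥ 1 and all partitions λ and μ each with at most ℓ parts, the constant term (the coefficient of z_1^0 ⋯ z_ℓ^0) of the Laurent polynomial s_λ(z_1,…,z_ℓ) · s_μ(z_1^{−1},…,z_ℓ^{−1}) · Δ(z_1,…,z_ℓ) · Δ(z_1^{−1},…,z_ℓ^{−1}) equals ℓ! if λ = μ and equals 0 otherwise. -/
noncomputable section

namespace Rect

/-- the monomial `z_i^e` in the Laurent polynomial ring `ℚ[z_1^{±1}, …, z_ℓ^{±1}]` -/
def zmon (ℓ : ℕ) (i : Fin ℓ) (e : ℤ) : AddMonoidAlgebra ℚ (Fin ℓ →₀ ℤ) :=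
  AddMonoidAlgebra.single (Finsupp.single i e) 1

/-- `det ((z_i^ε)^{λ_j + ℓ - j})` in the Laurent polynomial ring; for `l = []`
this is the bialternant denominator `det ((z_i^ε)^{ℓ-j})`. -/
def bialtL (ℓ : ℕ) (ε : ℤ) (l : List ℕ) : AddMonoidAlgebra ℚ (Fin ℓ →₀ ℤ) :=
  Matrix.det (Matrix.of fun i j : Fin ℓ =>
    zmon ℓ i (ε * ((l.getD j 0 : ℤ) + ((ℓ - 1 - (j : ℕ) : ℕ) : ℤ))))

/-- `Δ(z_1^ε, …, z_ℓ^ε) = Π_{i<j} (z_j^ε - z_i^ε)` in the Laurent polynomial ring -/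
def vandL (ℓ : ℕ) (ε : ℤ) : AddMonoidAlgebra ℚ (Fin ℓ →₀ ℤ) :=
  ∏ p ∈ Finset.univ.filter (fun p : Fin ℓ × Fin ℓ => p.1 < p.2),
    (zmon ℓ p.2 ε - zmon ℓ p.1 ε)

/-! Since `det(z_i^{ℓ-j})` is `±Δ`, with the sign squaring away, `P · Q · Δ(z) · Δ(z⁻¹)` is the
product of the alternants `det(z_i^{λ_j+ℓ-j})` and `det(z_i^{-(μ_j+ℓ-j)})`. Expanding both over
permutations, the term indexed by `(σ, τ)` is constant exactly when `(λ+δ) ∘ σ⁻¹ = (μ+δ) ∘ τ⁻¹`.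
As `λ+δ` and `μ+δ` are strictly decreasing, this forces `σ = τ` and `λ = μ`, and each of the `ℓ!`
surviving terms contributes `sign σ ^ 2 = 1`. -/

open Equiv

theorem _root_.StrictAnti.comp_symm_eq_comp_symm_iff {ι α : Type*} [LinearOrder ι] [Finite ι]
    [Preorder α] {a b : ι → α} (ha : StrictAnti a) (hb : StrictAnti b) {σ τ : Perm ι} :
    a ∘ σ.symm = b ∘ τ.symm ↔ a = b ∧ σ = τ := by
  refine ⟨fun h => ?_, fun ⟨hab, hστ⟩ => hab ▸ hστ ▸ rfl⟩
  have hπ : ∀ i, a (σ.symm (τ i)) = b i := fun i => by simpa using congrFun h (τ i)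
  have hmono : StrictMono fun i => σ.symm (τ i) := fun i j hij =>
    ha.lt_iff_gt.mp (by simpa only [hπ] using hb hij)
  have hστ : σ = τ := Equiv.ext fun i => by simpa using congrArg σ hmono.apply_eq.symm
  subst hστ
  exact ⟨funext fun i => by simpa using hπ i, rfl⟩

section Alternant

variable {R : Type*} [CommRing R] {n : ℕ}

variable (R) in
def alternant (a : Fin n → ℤ) : AddMonoidAlgebra R (Fin n →₀ ℤ) :=
  (Matrix.of fun i j : Fin n => AddMonoidAlgebra.single (Finsupp.single i (a j)) (1 : R)).det

theorem alternant_eq_sum (a : Fin n → ℤ) :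
    alternant R a = ∑ σ : Perm (Fin n),
      (Perm.sign σ : ℤ) •
        AddMonoidAlgebra.single (Finsupp.equivFunOnFinite.symm (a ∘ σ.symm)) 1 := by
  rw [alternant, Matrix.det_apply]
  refine Finset.sum_congr rfl fun σ _ => ?_
  simp only [Matrix.of_apply, AddMonoidAlgebra.prod_single, Finset.prod_const_one,
    Units.smul_def]
  rw [Finsupp.equivFunOnFinite_symm_eq_sum, ← Equiv.sum_comp σ (fun k => Finsupp.single k _)]
  simp

theorem coeff_zero_alternant_mul_alternant_neg (a b : Fin n → ℤ) :
    (alternant R a * alternant R (-b)).coeff 0 = ∑ σ : Perm (Fin n), ∑ τ : Perm (Fin n),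
      if a ∘ σ.symm = b ∘ τ.symm then ((Perm.sign σ * Perm.sign τ : ℤˣ) : R) else 0 := by
  classical
  simp only [alternant_eq_sum, Finset.sum_mul_sum, smul_mul_smul_comm,
    AddMonoidAlgebra.single_mul_single, one_mul, AddMonoidAlgebra.coeff_sum,
    Finsupp.finsetSum_apply, AddMonoidAlgebra.coeff_smul_apply, AddMonoidAlgebra.coeff_single]
  refine Finset.sum_congr rfl fun σ _ => Finset.sum_congr rfl fun τ _ => ?_
  have hzero : Finsupp.equivFunOnFinite.symm (a ∘ σ.symm) +
      Finsupp.equivFunOnFinite.symm ((-b) ∘ τ.symm) = 0 ↔ a ∘ σ.symm = b ∘ τ.symm := by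
    simp only [Finsupp.ext_iff, funext_iff, Finsupp.add_apply, Finsupp.coe_zero, Pi.zero_apply,
      Finsupp.equivFunOnFinite_symm_apply_apply, Function.comp_apply, Pi.neg_apply,
      ← sub_eq_add_neg, sub_eq_zero]
  rw [Finsupp.single_apply, if_congr hzero rfl rfl]
  split_ifs <;> simp

theorem coeff_zero_alternant_mul_alternant_neg_of_strictAnti {a b : Fin n → ℤ}
    (ha : StrictAnti a) (hb : StrictAnti b) :
    (alternant R a * alternant R (-b)).coeff 0 = if a = b then (n.factorial : R) else 0 := by
  simp only [coeff_zero_alternant_mul_alternant_neg, ha.comp_symm_eq_comp_symm_iff hb]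
  split_ifs with hab
  · simp only [hab, true_and, Finset.sum_ite_eq, Finset.mem_univ, if_true, Int.units_mul_self,
      Units.val_one, Int.cast_one, Finset.sum_const, Finset.card_univ, Fintype.card_perm,
      Fintype.card_fin, nsmul_one]
  · simp [hab]

end Alternant

/-- `λ + δ` with `δ = (ℓ-1, …, 1, 0)`, reading the parts of `l` beyond its length as `0`. -/
def shiftedParts (ℓ : ℕ) (l : List ℕ) (j : Fin ℓ) : ℤ :=
  (l.getD j 0 : ℤ) + ((ℓ - 1 - (j : ℕ) : ℕ) : ℤ)

theorem bialtL_eq_alternant (ℓ : ℕ) (ε : ℤ) (l : List ℕ) :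
    bialtL ℓ ε l = alternant ℚ (ε • shiftedParts ℓ l) :=
  rfl

theorem _root_.List.Pairwise.antitone_getD {l : List ℕ} (hl : l.Pairwise (· ≥ ·)) :
    Antitone fun j => l.getD j 0 := by
  intro i j hij
  show l.getD j 0 ≤ l.getD i 0
  by_cases hj : j < l.length
  · have hi : i < l.length := lt_of_le_of_lt hij hj
    rw [List.getD_eq_getElem l 0 hj, List.getD_eq_getElem l 0 hi]
    exact hl.rel_get_of_le (a := ⟨i, hi⟩) (b := ⟨j, hj⟩) hij
  · rw [List.getD_eq_default l 0 (le_of_not_gt hj)]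
    exact Nat.zero_le _

theorem shiftedParts_strictAnti (ℓ : ℕ) {l : List ℕ} (hl : l.Pairwise (· ≥ ·)) :
    StrictAnti (shiftedParts ℓ l) := by
  intro i j hij
  have := hl.antitone_getD hij.le
  have := j.isLt
  simp only [shiftedParts, Fin.lt_def] at *
  omega

theorem _root_.List.length_le_of_getD_eq {l m : List ℕ} (hm : ∀ x ∈ m, 0 < x)
    (h : ∀ n, l.getD n 0 = m.getD n 0) : m.length ≤ l.length := by
  by_contra! hlt
  have := h l.length
  rw [List.getD_eq_default l 0 le_rfl, List.getD_eq_getElem m 0 hlt] at this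
  exact (hm _ (List.getElem_mem hlt)).ne this

theorem IsPartition.ext_getD {l m : List ℕ} (hl : IsPartition l) (hm : IsPartition m)
    (h : ∀ n, l.getD n 0 = m.getD n 0) : l = m := by
  have hlen := le_antisymm (List.length_le_of_getD_eq hl.2 fun n => (h n).symm)
    (List.length_le_of_getD_eq hm.2 h)
  refine List.ext_getElem hlen fun n h₁ h₂ => ?_
  have := h n
  rwa [List.getD_eq_getElem l 0 h₁, List.getD_eq_getElem m 0 h₂] at this

theorem shiftedParts_inj {ℓ : ℕ} {l m : List ℕ} (hl : IsPartition l) (hll : l.length ≤ ℓ)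
    (hm : IsPartition m) (hml : m.length ≤ ℓ) :
    shiftedParts ℓ l = shiftedParts ℓ m ↔ l = m := by
  refine ⟨fun h => hl.ext_getD hm fun n => ?_, fun h => h ▸ rfl⟩
  by_cases hn : n < ℓ
  · simpa [shiftedParts] using congrFun h ⟨n, hn⟩
  · rw [List.getD_eq_default l 0 (by omega), List.getD_eq_default m 0 (by omega)]

theorem zmon_pow (ℓ : ℕ) (i : Fin ℓ) (ε : ℤ) (k : ℕ) : zmon ℓ i ε ^ k = zmon ℓ i (k * ε) := by
  simp [zmon, AddMonoidAlgebra.single_pow, Finsupp.smul_single]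

theorem vandL_eq_det_vandermonde (ℓ : ℕ) (ε : ℤ) :
    vandL ℓ ε = (Matrix.vandermonde fun i : Fin ℓ => zmon ℓ i ε).det := by
  rw [vandL, Matrix.det_vandermonde, Finset.prod_filter, Fintype.prod_prod_type]
  refine Finset.prod_congr rfl fun i _ => ?_
  rw [← Finset.prod_filter]
  congr 1
  ext j
  simp

theorem bialtL_nil (ℓ : ℕ) (ε : ℤ) :
    bialtL ℓ ε [] = Perm.sign (Fin.revPerm : Perm (Fin ℓ)) • vandL ℓ ε := by
  have hrev : bialtL ℓ ε [] =
      ((Matrix.vandermonde fun i : Fin ℓ => zmon ℓ i ε).submatrix id Fin.revPerm).det := by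
    refine congrArg Matrix.det (Matrix.ext fun i j => ?_)
    rw [Matrix.submatrix_apply, Matrix.vandermonde_apply, zmon_pow, Matrix.of_apply, id]
    congr 1
    simp only [List.getD_nil, Fin.revPerm_apply, Fin.val_rev, Nat.cast_zero, zero_add,
      Nat.sub_sub, Nat.add_comm 1]
    ring
  rw [hrev, Matrix.det_permute', vandL_eq_det_vandermonde, Units.smul_def, zsmul_eq_mul]

theorem vandL_mul_vandL (ℓ : ℕ) (ε ε' : ℤ) :
    vandL ℓ ε * vandL ℓ ε' = bialtL ℓ ε [] * bialtL ℓ ε' [] := by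
  rw [bialtL_nil, bialtL_nil, smul_mul_smul_comm, Int.units_mul_self, one_smul]

theorem schur_orthogonality_general (ℓ : ℕ) (lam mu : List ℕ)
    (hlam : IsPartition lam) (hlaml : lam.length ≤ ℓ)
    (hmu : IsPartition mu) (hmul : mu.length ≤ ℓ)
    (P Q : AddMonoidAlgebra ℚ (Fin ℓ →₀ ℤ))
    (hP : P * bialtL ℓ 1 [] = bialtL ℓ 1 lam)
    (hQ : Q * bialtL ℓ (-1) [] = bialtL ℓ (-1) mu) :
    (P * Q * vandL ℓ 1 * vandL ℓ (-1)).coeff 0 =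
      (if lam = mu then (Nat.factorial ℓ : ℚ) else 0) := by
  have hprod : P * Q * vandL ℓ 1 * vandL ℓ (-1) = bialtL ℓ 1 lam * bialtL ℓ (-1) mu := by
    rw [mul_assoc, vandL_mul_vandL, ← hP, ← hQ]
    ring
  rw [hprod, bialtL_eq_alternant, bialtL_eq_alternant, one_smul, neg_one_smul,
    coeff_zero_alternant_mul_alternant_neg_of_strictAnti (shiftedParts_strictAnti ℓ hlam.1)
      (shiftedParts_strictAnti ℓ hmu.1)]
  exact if_congr (shiftedParts_inj hlam hlaml hmu hmul) rfl rfl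

/-- **Orthogonality**: for partitions `λ, μ` with at most `ℓ` parts, the constant
term of `s_λ(z) · s_μ(z⁻¹) · Δ(z) · Δ(z⁻¹)` equals `ℓ!` if `λ = μ` and `0`
otherwise.  Here `P = s_λ(z)` and `Q = s_μ(z⁻¹)` are characterized by the
bialternant formulas `P · det(z_i^{ℓ-j}) = det(z_i^{λ_j+ℓ-j})` and
`Q · det(z_i^{-(ℓ-j)}) = det(z_i^{-(μ_j+ℓ-j)})`. -/
theorem schur_orthogonality (ℓ : ℕ) (hℓ : 1 ≤ ℓ) (lam mu : List ℕ)
    (hlam : IsPartition lam) (hlaml : lam.length ≤ ℓ)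
    (hmu : IsPartition mu) (hmul : mu.length ≤ ℓ)
    (P Q : AddMonoidAlgebra ℚ (Fin ℓ →₀ ℤ))
    (hP : P * bialtL ℓ 1 [] = bialtL ℓ 1 lam)
    (hQ : Q * bialtL ℓ (-1) [] = bialtL ℓ (-1) mu) :
    (P * Q * vandL ℓ 1 * vandL ℓ (-1)).coeff 0 =
      (if lam = mu then (Nat.factorial ℓ : ℚ) else 0) :=
  schur_orthogonality_general ℓ lam mu hlam hlaml hmu hmul P Q hP hQ

end Rect
end
end

section
/- For all integers m ≥ 0 and ℓ with 1 ≤ ℓ ≤ 2m+1, the coefficient of the monomial z_1^{2m} z_2^{2m} ⋯ z_ℓ^{2m} in the formal power series Δ(z)² · exp(Σ_{j=1}^{ℓ} Σ_{n≥1} t_n z_j^n) ∈ ℚ[t][[z_1,…,z_ℓ]] equals (−1)^{ℓ(ℓ−1)/2} · ℓ! · S_{□(ℓ, 2m+1−ℓ)}(t). -/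
noncomputable section

/-- The ring `ℚ[t₁, t₂, t₃, …]`. -/
abbrev R : Type := MvPolynomial ℕ+ ℚ

namespace Rect

/-- the variable `t_n` for `n ≥ 1` -/
def tv (n : ℕ+) : R := MvPolynomial.X n

/-- the power series `Σ_{n≥1} t_n z^n` -/
def tser : PowerSeries R := PowerSeries.mk fun n => if h : 0 < n then tv ⟨n, h⟩ else 0

/-- the power series `Σ_{n≥1} t_{2n-1} z^{2n-1}` -/
def tserOdd : PowerSeries R :=
  PowerSeries.mk fun n => if h : 0 < n ∧ n % 2 = 1 then tv ⟨n, h.1⟩ else 0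

/-- Exponential of a power series with zero constant term, coefficientwise:
`coeff n (exp G) = Σ_{k} coeff n (G^k) / k!` (only `k ≤ n` contribute). -/
def psExp {A : Type} [Ring A] [Algebra ℚ A] (G : PowerSeries A) : PowerSeries A :=
  PowerSeries.mk fun n => ∑ k ∈ Finset.range (n + 1), ((Nat.factorial k : ℚ))⁻¹ • PowerSeries.coeff n (G ^ k)

/-- `h_n(t)`, defined by `exp (Σ_{n≥1} t_n z^n) = Σ_{n≥0} h_n(t) z^n` -/
def hp (n : ℕ) : R := PowerSeries.coeff n (psExp tser)

/-- `h_k` for `k : ℤ`, with `h_k = 0` for `k < 0` -/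
def hz (k : ℤ) : R := if k < 0 then 0 else hp k.toNat

/-- `q_n(t)`, defined by `exp (Σ_{n≥1} t_{2n-1} z^{2n-1}) = Σ_{n≥0} q_n(t) z^n` -/
def qp (n : ℕ) : R := PowerSeries.coeff n (psExp tserOdd)

/-- the Schur S-function `S_λ(t) = det (h_{λ_i - i + j})` of a (weakly decreasing) list -/
def SchurS (l : List ℕ) : R :=
  Matrix.det (Matrix.of fun i j : Fin l.length => hz ((l.get i : ℤ) - (i : ℕ) + (j : ℕ)))

/-- the substitution `t_j ↦ t_{2j}`, so that `SchurS l (t^{(2)}) = dbl (SchurS l)` -/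
def dbl : R →ₐ[ℚ] R := MvPolynomial.rename fun j => 2 * j

/-- `Q_{m,n}` for `m > n ≥ 0`. -/
def QQaux (a b : ℕ) : R :=
  qp a * qp b + 2 * ∑ i ∈ Finset.Icc 1 b, (-1 : R) ^ i * (qp (a + i) * qp (b - i))

/-- the two-row Schur Q-function `Q_{a,b}` -/
def QQ (a b : ℕ) : R := if b < a then QQaux a b else if a < b then -QQaux b a else 0

lemma eraseIdx_length_lt (a : ℕ) (rest : List ℕ) (j : ℕ) :
    (rest.eraseIdx j).length < (a :: rest).length :=
  Nat.lt_succ_of_le (List.length_eraseIdx_le rest j)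

/-- the Pfaffian of `(Q_{λ_i,λ_j})`, by expansion along the first row -/
def QPf : List ℕ → R
  | [] => 1
  | a :: rest =>
    ∑ j ∈ Finset.range rest.length,
      (-1 : R) ^ j * QQ a (rest.getD j 0) * QPf (rest.eraseIdx j)
  termination_by l => l.length
  decreasing_by exact eraseIdx_length_lt a rest j

/-- the Schur Q-function of a strict partition (a `0` part is appended if the
number of parts is odd) -/
def SchurQ (l : List ℕ) : R := QPf (if l.length % 2 = 0 then l else l ++ [0])


/-- coefficientwise exponential of a multivariate power series with zero
constant term: `coeff α (exp G) = Σ_k coeff α (G^k) / k!` (only `k ≤ |α|` contribute) -/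
def mvExp {σ : Type} (G : MvPowerSeries σ R) : MvPowerSeries σ R :=
  fun α => ∑ k ∈ Finset.range ((α.sum fun _ n => n) + 1),
    ((Nat.factorial k : ℚ))⁻¹ • MvPowerSeries.coeff α (G ^ k)

/-- the series `Ξ = Σ_{j=1}^{ℓ} Σ_{n≥1} t_n z_j^n` -/
def Xi (ℓ : ℕ) : MvPowerSeries (Fin ℓ) R :=
  fun α => if h : α.support.card = 1 ∧ 0 < (α.sum fun _ n => n)
    then tv ⟨α.sum fun _ n => n, h.2⟩ else 0

/-- the Vandermonde determinant `Δ(z) = Π_{i<j} (z_j - z_i)` as a power series -/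
def vandPS (ℓ : ℕ) : MvPowerSeries (Fin ℓ) R :=
  ∏ p ∈ Finset.univ.filter (fun p : Fin ℓ × Fin ℓ => p.1 < p.2),
    (MvPowerSeries.X p.2 - MvPowerSeries.X p.1)

/-- the bialternant numerator `det (z_i^{λ_j + ℓ - j})` -/
def bialtPoly (ℓ : ℕ) (l : List ℕ) : MvPolynomial (Fin ℓ) ℚ :=
  Matrix.det (Matrix.of fun i j : Fin ℓ => (MvPolynomial.X i) ^ (l.getD j 0 + (ℓ - 1 - (j : ℕ))))

/-- the bialternant denominator `det (z_i^{ℓ - j})` -/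
def denomPoly (ℓ : ℕ) : MvPolynomial (Fin ℓ) ℚ :=
  Matrix.det (Matrix.of fun i j : Fin ℓ => (MvPolynomial.X i) ^ (ℓ - 1 - (j : ℕ)))

/-- the conjugate (transpose) of a partition -/
def conjP (l : List ℕ) : List ℕ :=
  (List.range (l.getD 0 0)).map fun i => l.countP fun x => decide (i < x)

/-!
Write `Δ(z)² = (-1)^{ℓ(ℓ-1)/2} det(z_i^j) det(z_i^{ℓ-1-j})` and expand both determinants over
permutations `σ, τ`. As `exp(Ξ) = ∏_i Σ_n h_n(t) z_i^n`, the coefficient of `z_1^{2m} ⋯ z_ℓ^{2m}`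
in the `(σ, τ)` term is `sign σ sign τ ∏_i h_{2m+1-ℓ-σ(i)+τ(i)}`. For fixed `σ` the sum over `τ` is
`sign σ · det(h_{2m+1-ℓ-j+k})`, so the whole sum is `ℓ!` times this Jacobi–Trudi determinant.

The factorisation of `exp(Ξ)` rests on `exp(G + H) = exp G · exp H`, which holds modulo the ideal
of series of order `> N` for every `N`: there, series without constant term are nilpotent, and
nilpotent exponentials are multiplicative.
-/

end Rect

open Finset

namespace Matrix

variable {n A : Type*} [Fintype n] [DecidableEq n] [CommRing A]

theorem sum_sign_smul_sum_sign_smul_prod (M : Matrix n n A) :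
    ∑ σ : Equiv.Perm n, ∑ τ : Equiv.Perm n,
        Equiv.Perm.sign σ • Equiv.Perm.sign τ • ∏ i, M (σ i) (τ i) =
      ((Fintype.card n).factorial : A) * M.det := by
  have row_permuted (σ : Equiv.Perm n) :
      ∑ τ : Equiv.Perm n, Equiv.Perm.sign τ • ∏ i, M (σ i) (τ i) = Equiv.Perm.sign σ • M.det := by
    rw [Units.smul_def, zsmul_eq_mul, ← det_permute, ← det_transpose, det_apply]
    rfl
  simp_rw [← smul_sum, row_permuted, smul_smul, Int.units_mul_self, one_smul, sum_const,
    card_univ, Fintype.card_perm, nsmul_eq_mul]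

theorem det_of_pow_rev {ℓ : ℕ} (v : Fin ℓ → A) :
    (of fun i j : Fin ℓ => v i ^ (j.rev : ℕ)).det =
      (-1) ^ (ℓ * (ℓ - 1) / 2) * (vandermonde v).det := by
  have hproj : (of fun i j : Fin ℓ => v i ^ (j.rev : ℕ)) = projVandermonde 1 v := by
    ext i j
    simp [projVandermonde_apply]
  have hflip (i j : Fin ℓ) : 1 * v i - 1 * v j = -1 * (v j - v i) := by ring
  simp only [hproj, det_projVandermonde, det_vandermonde, Pi.one_apply, hflip, prod_mul_distrib,
    prod_const, Fin.card_Ioi, prod_pow_eq_pow_sum]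
  rw [← sum_range_id, Fin.sum_univ_eq_sum_range (fun i => ℓ - 1 - i)]
  congr 2
  exact sum_range_reflect id ℓ

end Matrix

namespace MvPowerSeries

variable {σ A : Type*} [CommSemiring A]

def oneVar (i : σ) : PowerSeries A →ₐ[A] MvPowerSeries σ A :=
  rename (Function.Embedding.punit i)

theorem coeff_oneVar [DecidableEq σ] (i : σ) (f : PowerSeries A) (β : σ →₀ ℕ) :
    coeff β (oneVar i f) =
      if β = Finsupp.single i (β i) then PowerSeries.coeff (β i) f else 0 := by
  split_ifs with hβ
  · obtain ⟨n, rfl⟩ : ∃ n, β = Finsupp.single i n := ⟨_, hβ⟩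
    rw [Finsupp.single_eq_same]
    have h := coeff_embDomain_rename (Function.Embedding.punit i) f (Finsupp.single () n)
    rwa [Finsupp.embDomain_single] at h
  · refine coeff_rename_eq_zero _ _ ?_
    rintro ⟨x, rfl⟩
    apply hβ
    rw [Finsupp.unique_single x, Finsupp.mapDomain_single]
    exact (congrArg _ Finsupp.single_eq_same).symm

theorem oneVar_X (i : σ) : oneVar i (PowerSeries.X : PowerSeries A) = X i :=
  rename_X _ ()

theorem constantCoeff_oneVar (i : σ) (f : PowerSeries A) :
    constantCoeff (oneVar i f) = PowerSeries.constantCoeff f :=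
  constantCoeff_rename _ f

theorem coeff_prod_oneVar [Fintype σ] (f : σ → PowerSeries A) (α : σ →₀ ℕ) :
    coeff α (∏ i, oneVar i (f i)) = ∏ i, PowerSeries.coeff (α i) (f i) := by
  classical
  let diag : σ →₀ σ →₀ ℕ := Finsupp.equivFunOnFinite.symm fun i => Finsupp.single i (α i)
  rw [coeff_prod, sum_eq_single diag]
  · simp [diag, coeff_oneVar]
  · intro l hl hne
    by_cases hsingle : ∀ i, l i = Finsupp.single i (l i i)
    · refine absurd (Finsupp.ext fun i => ?_) hne
      have hsum := DFunLike.congr_fun (mem_finsuppAntidiag.mp hl).1 i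
      rw [Finsupp.finsetSum_apply, sum_eq_single i (fun j _ hji => by
        rw [hsingle j, Finsupp.single_eq_of_ne' hji]) (by simp)] at hsum
      rw [hsingle i, hsum]
      rfl
    · push Not at hsingle
      obtain ⟨i, hi⟩ := hsingle
      exact prod_eq_zero (mem_univ i) (by rw [coeff_oneVar, if_neg hi])
  · intro hdiag
    refine absurd (mem_finsuppAntidiag.mpr ⟨?_, subset_univ _⟩) hdiag
    exact Finsupp.univ_sum_single α

variable {A : Type*} [CommRing A] {ℓ : ℕ}

theorem det_of_X_pow (e : Fin ℓ → Fin ℓ → ℕ) :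
    (Matrix.of fun i j => (X i : MvPowerSeries (Fin ℓ) A) ^ e i j).det =
      ∑ σ : Equiv.Perm (Fin ℓ), Equiv.Perm.sign σ • ∏ i, oneVar i (PowerSeries.X ^ e i (σ i)) := by
  rw [← Matrix.det_transpose, Matrix.det_apply]
  simp [oneVar_X]

theorem coeff_det_vandermonde_sq_mul_prod_oneVar (E : PowerSeries A) (c : ℕ) :
    coeff (Finsupp.equivFunOnFinite.symm fun _ : Fin ℓ => c)
        ((Matrix.vandermonde fun i => (X i : MvPowerSeries (Fin ℓ) A)).det ^ 2 *
          ∏ i, oneVar i E) =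
      (-1) ^ (ℓ * (ℓ - 1) / 2) * (ℓ.factorial : A) *
        (Matrix.of fun j k : Fin ℓ =>
          PowerSeries.coeff c (PowerSeries.X ^ ((j : ℕ) + k.rev) * E)).det := by
  set N := ℓ * (ℓ - 1) / 2
  set V := Matrix.vandermonde fun i => (X i : MvPowerSeries (Fin ℓ) A) with hV
  have hsign : ((-1) ^ N * (-1) ^ N : MvPowerSeries (Fin ℓ) A) = 1 := by
    rw [← mul_pow, neg_one_mul, neg_neg, one_pow]
  have hsq : V.det ^ 2 = (-1) ^ N * (V.det *
      (Matrix.of fun i j : Fin ℓ => (X i : MvPowerSeries (Fin ℓ) A) ^ (j.rev : ℕ)).det) := by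
    rw [Matrix.det_of_pow_rev]
    linear_combination -V.det ^ 2 * hsign
  have hexpand := Matrix.sum_sign_smul_sum_sign_smul_prod (Matrix.of fun j k : Fin ℓ =>
    PowerSeries.coeff c (PowerSeries.X ^ ((j : ℕ) + k.rev) * E))
  rw [Fintype.card_fin] at hexpand
  rw [hsq, hV, show Matrix.vandermonde _ = Matrix.of fun i j : Fin ℓ =>
      (X i : MvPowerSeries (Fin ℓ) A) ^ (j : ℕ) from rfl, det_of_X_pow, det_of_X_pow,
    show ((-1) ^ N : MvPowerSeries (Fin ℓ) A) = C ((-1) ^ N) by simp, mul_assoc, coeff_C_mul,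
    mul_assoc ((-1) ^ N : A), ← hexpand, sum_mul_sum, sum_mul, map_sum]
  refine congrArg _ (sum_congr rfl fun σ _ => ?_)
  rw [sum_mul, map_sum]
  refine sum_congr rfl fun τ _ => ?_
  simp only [Units.smul_def, smul_mul_assoc, mul_smul_comm, map_zsmul, ← prod_mul_distrib,
    ← map_mul, coeff_prod_oneVar, Matrix.of_apply, pow_add, Finsupp.coe_equivFunOnFinite_symm]
  exact smul_comm _ _ _

end MvPowerSeries

namespace Rect

open MvPowerSeries

section Exp

variable {σ : Type}

def orderGtIdeal (σ : Type) (N : ℕ) : Ideal (MvPowerSeries σ R) where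
  carrier := {F | ((N + 1 : ℕ) : ℕ∞) ≤ F.order}
  add_mem' hF hG := (le_min hF hG).trans min_order_le_add
  zero_mem' := by simp
  smul_mem' c _ hF := hF.trans (le_add_self.trans le_order_mul)

theorem coeff_eq_zero_of_mem_orderGtIdeal {N : ℕ} {F : MvPowerSeries σ R}
    (hF : F ∈ orderGtIdeal σ N) {d : σ →₀ ℕ} (hd : d.degree ≤ N) : coeff d F = 0 :=
  coeff_of_lt_order (lt_of_lt_of_le (by exact_mod_cast Nat.lt_succ_of_le hd) hF)

theorem coeff_pow_eq_zero_of_degree_lt {G : MvPowerSeries σ R} (hG : constantCoeff G = 0)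
    {d : σ →₀ ℕ} {k : ℕ} (hk : d.degree < k) : coeff d (G ^ k) = 0 :=
  coeff_of_lt_order
    (lt_of_lt_of_le (by exact_mod_cast hk) (le_order_pow_of_constantCoeff_eq_zero k hG))

theorem coeff_mvExp (G : MvPowerSeries σ R) (d : σ →₀ ℕ) :
    coeff d (mvExp G) =
      ∑ k ∈ Finset.range (d.degree + 1), (k.factorial : ℚ)⁻¹ • coeff d (G ^ k) :=
  rfl

theorem mvExp_sub_sum_mem_orderGtIdeal {G : MvPowerSeries σ R} (hG : constantCoeff G = 0)
    (N : ℕ) :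
    mvExp G - ∑ k ∈ Finset.range (N + 1), (k.factorial : ℚ)⁻¹ • G ^ k ∈ orderGtIdeal σ N := by
  refine nat_le_order fun d hd => ?_
  rw [map_sub, map_sum, coeff_mvExp, sub_eq_zero]
  refine Finset.sum_subset (Finset.range_subset_range.mpr (by omega)) fun k _ hk => ?_
  rw [coeff_pow_eq_zero_of_degree_lt hG (by simpa using hk), smul_zero]

theorem mk_pow_succ_eq_zero {G : MvPowerSeries σ R} (hG : constantCoeff G = 0) (N : ℕ) :
    Ideal.Quotient.mk (orderGtIdeal σ N) G ^ (N + 1) = 0 := by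
  rw [← map_pow, Ideal.Quotient.eq_zero_iff_mem]
  exact le_order_pow_of_constantCoeff_eq_zero _ hG

theorem mk_mvExp {G : MvPowerSeries σ R} (hG : constantCoeff G = 0) (N : ℕ) :
    Ideal.Quotient.mk (orderGtIdeal σ N) (mvExp G) =
      IsNilpotent.exp (Ideal.Quotient.mk (orderGtIdeal σ N) G) := by
  calc Ideal.Quotient.mk (orderGtIdeal σ N) (mvExp G)
      = Ideal.Quotient.mkₐ ℚ (orderGtIdeal σ N)
          (∑ k ∈ Finset.range (N + 1), (k.factorial : ℚ)⁻¹ • G ^ k) := by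
        rw [Ideal.Quotient.mkₐ_eq_mk, Ideal.Quotient.eq]
        exact mvExp_sub_sum_mem_orderGtIdeal hG N
    _ = ∑ k ∈ Finset.range (N + 1),
          (k.factorial : ℚ)⁻¹ • Ideal.Quotient.mk (orderGtIdeal σ N) G ^ k := by
        simp only [map_sum, map_smul, map_pow, Ideal.Quotient.mkₐ_eq_mk]
    _ = _ := (IsNilpotent.exp_eq_sum (mk_pow_succ_eq_zero hG N)).symm

theorem eq_of_forall_mk_eq {F F' : MvPowerSeries σ R}
    (h : ∀ N, Ideal.Quotient.mk (orderGtIdeal σ N) F = Ideal.Quotient.mk (orderGtIdeal σ N) F') :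
    F = F' :=
  MvPowerSeries.ext fun d => by
    rw [← sub_eq_zero, ← map_sub]
    exact coeff_eq_zero_of_mem_orderGtIdeal (Ideal.Quotient.eq.mp (h d.degree)) le_rfl

theorem mvExp_zero : mvExp (0 : MvPowerSeries σ R) = 1 :=
  eq_of_forall_mk_eq fun N => by
    rw [mk_mvExp (map_zero _), map_zero, IsNilpotent.exp_zero, map_one]

theorem mvExp_add {G H : MvPowerSeries σ R} (hG : constantCoeff G = 0)
    (hH : constantCoeff H = 0) : mvExp (G + H) = mvExp G * mvExp H :=
  eq_of_forall_mk_eq fun N => by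
    rw [map_mul, mk_mvExp hG, mk_mvExp hH, mk_mvExp (by simp [hG, hH]), map_add]
    exact IsNilpotent.exp_add_of_commute (Commute.all _ _) ⟨_, mk_pow_succ_eq_zero hG N⟩
      ⟨_, mk_pow_succ_eq_zero hH N⟩

theorem mvExp_sum {ι : Type*} (s : Finset ι) {F : ι → MvPowerSeries σ R}
    (hF : ∀ i ∈ s, constantCoeff (F i) = 0) : mvExp (∑ i ∈ s, F i) = ∏ i ∈ s, mvExp (F i) := by
  classical
  induction s using Finset.induction_on with
  | empty => simpa using mvExp_zero
  | insert j s hj ih =>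
    rw [Finset.forall_mem_insert] at hF
    rw [Finset.sum_insert hj, Finset.prod_insert hj,
      mvExp_add hF.1 (by simp [map_sum, Finset.sum_eq_zero hF.2]), ih hF.2]

theorem mvExp_oneVar (i : σ) (G : PowerSeries R) :
    mvExp (oneVar i G) = oneVar i (psExp G) := by
  classical
  refine MvPowerSeries.ext fun β => ?_
  simp_rw [coeff_mvExp, ← map_pow, coeff_oneVar]
  split_ifs with hβ
  · rw [psExp, PowerSeries.coeff_mk, hβ, Finsupp.degree_single, Finsupp.single_eq_same]
  · simp

end Exp

theorem constantCoeff_tser : PowerSeries.constantCoeff tser = 0 := by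
  simp [tser]

theorem Xi_eq_sum_oneVar (ℓ : ℕ) : Xi ℓ = ∑ i, oneVar i tser := by
  refine MvPowerSeries.ext fun α => ?_
  rw [coeff_apply, Xi, map_sum]
  simp_rw [coeff_oneVar]
  by_cases hcard : α.support.card = 1
  · obtain ⟨i, n, hn, rfl⟩ := Finsupp.card_support_eq_one'.mp hcard
    have hdeg : ((Finsupp.single i n).sum fun _ n => n) = n := Finsupp.sum_single_index rfl
    rw [Finset.sum_eq_single i, if_pos (by rw [Finsupp.single_eq_same]),
      dif_pos ⟨hcard, by rw [hdeg]; exact Nat.pos_of_ne_zero hn⟩, tser, Finsupp.single_eq_same,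
      PowerSeries.coeff_mk, dif_pos (Nat.pos_of_ne_zero hn)]
    · simp only [hdeg]
    · intro j _ hji
      refine if_neg ?_
      rw [Finsupp.single_eq_of_ne' hji.symm, Finsupp.single_zero, Finsupp.single_eq_zero]
      exact hn
    · simp
  · rw [dif_neg fun h => hcard h.1]
    refine (Finset.sum_eq_zero fun j _ => ?_).symm
    split_ifs with hαj
    · have hαj0 : α j = 0 := by
        by_contra h
        exact hcard (Finsupp.card_support_eq_one.mpr ⟨j, h, hαj⟩)
      rw [hαj0, PowerSeries.coeff_zero_eq_constantCoeff_apply, constantCoeff_tser]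
    · rfl

theorem mvExp_Xi (ℓ : ℕ) : mvExp (Xi ℓ) = ∏ i, oneVar i (psExp tser) := by
  rw [Xi_eq_sum_oneVar, mvExp_sum _ fun i _ => by rw [constantCoeff_oneVar, constantCoeff_tser]]
  simp_rw [mvExp_oneVar]

theorem vandPS_eq_det_vandermonde (ℓ : ℕ) :
    vandPS ℓ = (Matrix.vandermonde fun i => (X i : MvPowerSeries (Fin ℓ) R)).det := by
  rw [Matrix.det_vandermonde, vandPS, Finset.prod_filter, Fintype.prod_prod_type]
  refine Finset.prod_congr rfl fun i _ => ?_
  rw [← Finset.prod_filter, Finset.filter_lt_eq_Ioi]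

theorem coeff_X_pow_mul_psExp_tser (c k : ℕ) :
    PowerSeries.coeff c (PowerSeries.X ^ k * psExp tser) = hz ((c : ℤ) - k) := by
  rw [PowerSeries.coeff_X_pow_mul', hz, hp]
  split_ifs with hk hneg hneg
  · omega
  · rw [show ((c : ℤ) - k).toNat = c - k by omega]
  · rfl
  · omega

theorem SchurS_replicate (ℓ a : ℕ) :
    SchurS (List.replicate ℓ a) =
      (Matrix.of fun i j : Fin ℓ => hz ((a : ℤ) - (i : ℕ) + (j : ℕ))).det := by
  rw [SchurS, ← Matrix.det_submatrix_equiv_self (finCongr List.length_replicate.symm)]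
  congr
  ext i j
  simp

theorem vertex_coeff_f0_general (m ℓ : ℕ) (h2 : ℓ ≤ 2 * m + 1) :
    MvPowerSeries.coeff (Finsupp.equivFunOnFinite.symm fun _ : Fin ℓ => 2 * m)
        (vandPS ℓ ^ 2 * mvExp (Xi ℓ)) =
      (-1 : R) ^ (ℓ * (ℓ - 1) / 2) * (Nat.factorial ℓ : R) *
        SchurS (List.replicate ℓ (2 * m + 1 - ℓ)) := by
  rw [mvExp_Xi, vandPS_eq_det_vandermonde, coeff_det_vandermonde_sq_mul_prod_oneVar,
    SchurS_replicate]
  refine congrArg _ (congrArg _ (Matrix.ext fun j k => ?_))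
  rw [Matrix.of_apply, Matrix.of_apply, coeff_X_pow_mul_psExp_tser, Fin.val_rev]
  have hk := k.isLt
  congr 1
  omega

/-- The coefficient of `z_1^{2m} ⋯ z_ℓ^{2m}` in `Δ(z)² · exp(Σ_j Σ_n t_n z_j^n)`
is `(-1)^{ℓ(ℓ-1)/2} · ℓ! · S_{□(ℓ, 2m+1-ℓ)}(t)`. -/
theorem vertex_coeff_f0 (m ℓ : ℕ) (h1 : 1 ≤ ℓ) (h2 : ℓ ≤ 2 * m + 1) :
    MvPowerSeries.coeff (Finsupp.equivFunOnFinite.symm fun _ : Fin ℓ => 2 * m)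
        (vandPS ℓ ^ 2 * mvExp (Xi ℓ)) =
      (-1 : R) ^ (ℓ * (ℓ - 1) / 2) * (Nat.factorial ℓ : R) *
        SchurS (List.replicate ℓ (2 * m + 1 - ℓ)) :=
  vertex_coeff_f0_general m ℓ h2

end Rect
end
end

section
/- Let m > 0 be an integer, ℓ ≥ 0, and let λ ∈ I_1^ℓ(c_m). Then λ has exactly m parts, and for each 1 ≤ j ≤ m the difference r_j = λ_j − (c_m)_j lies in {0,1,2}; moreover, with ε_m = 1 if m is odd and ε_m = 0 if m is even, and a(λ) = #{j : 1 ≤ j ≤ m, λ_j is even} + ε_m, one has r_1! · r_2! ⋯ r_m! = 2^{(ℓ − a(λ) + ε_m)/2}. -/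
/-!
Every part of `c_m` is `≡ 1 (mod 4)`, so the columns following the end of a row of `c_m` are
coloured `1, 1, 0, …`, and column `1` of an empty row has colour `0`. Hence adding colour-1
nodes to `c_m` lengthens each of its `m` rows by `r_j ∈ {0, 1, 2}` and creates no new row.
Since `(c_m)_j` is odd, `λ_j` is even exactly when `r_j = 1`, so
`ℓ = ∑ r_j = #{r_j = 1} + 2 · #{r_j = 2}` and `∏ r_j! = 2 ^ #{r_j = 2}`.
-/

noncomputable section

open Finset

namespace List

theorem sum_eq_sum_range_getD {M : Type*} [AddCommMonoid M] (l : List M) :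
    l.sum = ∑ j ∈ Finset.range l.length, l.getD j 0 := by
  induction l with
  | nil => simp
  | cons a t ih => simp [Finset.sum_range_succ', ih, add_comm]

theorem countP_eq_card_filter_range_getD {α : Type*} (p : α → Bool) (d : α) (l : List α) :
    l.countP p = #{j ∈ Finset.range l.length | p (l.getD j d)} := by
  induction l with
  | nil => simp
  | cons a t ih =>
    rw [countP_cons, ih, length_cons, card_filter, card_filter, Finset.sum_range_succ']
    simp

theorem length_eq_of_getD_pos_of_getD_eq_zero {l : List ℕ} {n : ℕ} (hpos : ∀ x ∈ l, 0 < x)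
    (hlt : ∀ j < n, 0 < l.getD j 0) (hn : l.getD n 0 = 0) : l.length = n := by
  by_contra hne
  rcases Nat.lt_or_gt_of_ne hne with hl | hl
  · simpa using hlt l.length hl
  · rw [getD_eq_getElem _ _ hl] at hn
    exact (hpos _ (getElem_mem hl)).ne' hn

end List

namespace Finset

variable {ι : Type*} {s : Finset ι} {r : ι → ℕ}

theorem sum_eq_two_mul_card_add_card_of_le_two (hr : ∀ i ∈ s, r i ≤ 2) :
    ∑ i ∈ s, r i = 2 * #{i ∈ s | r i = 2} + #{i ∈ s | r i = 1} := by
  rw [card_filter, card_filter, mul_sum, ← sum_add_distrib]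
  refine sum_congr rfl fun i hi => ?_
  have := hr i hi
  split_ifs <;> omega

theorem prod_factorial_eq_two_pow_card_of_le_two (hr : ∀ i ∈ s, r i ≤ 2) :
    ∏ i ∈ s, (r i).factorial = 2 ^ #{i ∈ s | r i = 2} := by
  rw [card_filter, ← prod_pow_eq_pow_sum]
  refine prod_congr rfl fun i hi => ?_
  obtain h | h | h : r i = 0 ∨ r i = 1 ∨ r i = 2 := by have := hr i hi; omega
  all_goals simp [h]

end Finset

namespace Rect

theorem length_cBar_natCast (m : ℕ) : (cBar m).length = m := by
  simp [cBar]

theorem getD_cBar_natCast (m j : ℕ) :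
    (cBar m).getD j 0 = if j < m then 4 * (m - 1 - j) + 1 else 0 := by
  split_ifs with hj
  · rw [List.getD_eq_getElem _ _ (by rwa [length_cBar_natCast])]
    simp [cBar]
  · exact List.getD_eq_default _ _ (by rw [length_cBar_natCast]; omega)

section ISetOne

variable {ℓ : ℕ} {lam mu : List ℕ}

theorem getD_eq_of_mem_ISet_one (h : mu ∈ ISet 1 ℓ lam) {j : ℕ} (hj : lam.getD j 0 % 4 = 0) :
    mu.getD j 0 = lam.getD j 0 := by
  obtain ⟨-, hle, -, hcol⟩ := h
  refine le_antisymm (not_lt.mp fun hlt => ?_) (hle j)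
  have := hcol j (lam.getD j 0 + 1) (by omega) hlt
  rw [nodeColor, if_pos (by omega)] at this
  omega

theorem getD_le_add_two_of_mem_ISet_one (h : mu ∈ ISet 1 ℓ lam) {j : ℕ}
    (hj : lam.getD j 0 % 4 = 1) : mu.getD j 0 ≤ lam.getD j 0 + 2 := by
  obtain ⟨-, -, -, hcol⟩ := h
  by_contra! hlt
  have := hcol j (lam.getD j 0 + 3) (by omega) hlt
  rw [nodeColor, if_pos (by omega)] at this
  omega

end ISetOne

section ISetOneCBar

variable {m ℓ : ℕ} {mu : List ℕ}

theorem length_of_mem_ISet_one_cBar (h : mu ∈ ISet 1 ℓ (cBar m)) : mu.length = m := by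
  refine List.length_eq_of_getD_pos_of_getD_eq_zero h.1.2 (fun j hj => ?_) ?_
  · have := h.2.1 j
    rw [getD_cBar_natCast, if_pos hj] at this
    omega
  · have := getD_eq_of_mem_ISet_one h (j := m) (by rw [getD_cBar_natCast]; simp)
    rwa [getD_cBar_natCast, if_neg (lt_irrefl m)] at this

theorem getD_sub_cBar_le_two (h : mu ∈ ISet 1 ℓ (cBar m)) (j : ℕ) :
    mu.getD j 0 - (cBar m).getD j 0 ≤ 2 := by
  by_cases hj : j < m
  · have := getD_le_add_two_of_mem_ISet_one h (j := j) (by rw [getD_cBar_natCast]; simp [hj])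
    omega
  · have := getD_eq_of_mem_ISet_one h (j := j) (by rw [getD_cBar_natCast]; simp [hj])
    omega

theorem sum_getD_sub_cBar (h : mu ∈ ISet 1 ℓ (cBar m)) :
    ∑ j ∈ range m, (mu.getD j 0 - (cBar m).getD j 0) = ℓ := by
  have hlen := length_of_mem_ISet_one_cBar h
  obtain ⟨-, hle, hsum, -⟩ := h
  rw [List.sum_eq_sum_range_getD, List.sum_eq_sum_range_getD, hlen,
    length_cBar_natCast] at hsum
  have hsplit : ∀ j ∈ range m,
      mu.getD j 0 = (cBar m).getD j 0 + (mu.getD j 0 - (cBar m).getD j 0) :=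
    fun j _ => (Nat.add_sub_of_le (hle j)).symm
  rw [sum_congr rfl hsplit, sum_add_distrib] at hsum
  omega

theorem countP_even_of_mem_ISet_one_cBar (h : mu ∈ ISet 1 ℓ (cBar m)) :
    (mu.countP fun x => x % 2 == 0) = #{j ∈ range m | mu.getD j 0 - (cBar m).getD j 0 = 1} := by
  rw [List.countP_eq_card_filter_range_getD _ 0, length_of_mem_ISet_one_cBar h]
  congr 1
  refine filter_congr fun j hj => ?_
  have hc := getD_cBar_natCast m j
  have hr := getD_sub_cBar_le_two h j
  have hle := h.2.1 j
  rw [if_pos (mem_range.mp hj)] at hc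
  simp only [beq_iff_eq]
  omega

theorem factorial_product_one_general (m ℓ : ℕ) (lam : List ℕ)
    (h : lam ∈ ISet 1 ℓ (cBar (m : ℤ))) :
    lam.length = m ∧
    (∀ j < m, lam.getD j 0 - (cBar (m : ℤ)).getD j 0 ∈ ({0, 1, 2} : Set ℕ)) ∧
    ∃ e : ℕ,
      2 * e + ((lam.countP fun x => x % 2 == 0) + epsN m) = ℓ + epsN m ∧
      (∏ j ∈ Finset.range m, Nat.factorial (lam.getD j 0 - (cBar (m : ℤ)).getD j 0)) = 2 ^ e := by
  have hr : ∀ j ∈ range m, lam.getD j 0 - (cBar m).getD j 0 ≤ 2 :=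
    fun j _ => getD_sub_cBar_le_two h j
  refine ⟨length_of_mem_ISet_one_cBar h, fun j _ => ?_, _, ?_,
    prod_factorial_eq_two_pow_card_of_le_two hr⟩
  · have := getD_sub_cBar_le_two h j
    simp only [Set.mem_insert_iff, Set.mem_singleton_iff]
    omega
  · rw [countP_even_of_mem_ISet_one_cBar h, ← sum_getD_sub_cBar h,
      sum_eq_two_mul_card_add_card_of_le_two hr, add_assoc]

/-- For `m > 0` and `λ ∈ I_1^ℓ(c_m)`: `λ` has exactly `m` parts, each difference
`r_j = λ_j - (c_m)_j` lies in `{0,1,2}`, and with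
`a(λ) = #{j ≤ m : λ_j even} + ε_m` one has `r_1! ⋯ r_m! = 2^{(ℓ - a(λ) + ε_m)/2}`
(in particular `ℓ - a(λ) + ε_m` is a nonnegative even integer `2e`). -/
theorem factorial_product_one (m ℓ : ℕ) (hm : 0 < m) (lam : List ℕ)
    (h : lam ∈ ISet 1 ℓ (cBar (m : ℤ))) :
    lam.length = m ∧
    (∀ j < m, lam.getD j 0 - (cBar (m : ℤ)).getD j 0 ∈ ({0, 1, 2} : Set ℕ)) ∧
    ∃ e : ℕ,
      2 * e + ((lam.countP fun x => x % 2 == 0) + epsN m) = ℓ + epsN m ∧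
      (∏ j ∈ Finset.range m, Nat.factorial (lam.getD j 0 - (cBar (m : ℤ)).getD j 0)) = 2 ^ e :=
  factorial_product_one_general m ℓ lam h

end ISetOneCBar

end Rect
end
end
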